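/- Fix a real number M > 1. There exist constants K > 0 and δ > 0 such that for every integer i ≥ 1, every real p₀ and every vector p ∈ ℝ³, the complex number C_i(p₀,p) = ∫_{M^{-2i}}^{M^{-2(i-1)}} (-i·p₀ + (‖p‖² - 1))·exp(-α·(p₀² + (‖p‖² - 1)²)) dα satisfies ‖C_i(p₀,p)‖ ≤ K·M^{-i}·exp(-δ·M^{-i}·(|p₀| + ‖p‖²)). -/

import Mathlib

/-!
With `s = M⁻ⁱ` and `E = p₀² + (‖p‖² - 1)²`, the integrand has modulus `√E e^{-αE}`, which on the
slice `[s², M² s²]` is at most `√E e^{-s²E}`; the slice has length at most `M² s²`. Writing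
`t = s√E`, this gives `M² s · t e^{-t²}`, and `t e^{-t²} ≤ e^{-t²/2}`. Finally the Gaussian decay
`e^{-s²E/2}` dominates the exponential decay `e^{-s(|p₀| + ‖p‖²)/4}` up to a factor `e`, because
`u/4 ≤ u²/2 + 1/32` for `u = s|p₀|` and `u = s|‖p‖² - 1|`, and `s ≤ 1`.
-/

open Complex

/-- Integrated over `α ∈ (0, ∞)` it gives the propagator `1 / (i p₀ + e)` (for `(p₀, e) ≠ 0`). -/
noncomputable def schwingerIntegrand (p₀ e α : ℝ) : ℂ :=
  (-(p₀ : ℂ) * I + (e : ℂ)) * exp (-(α : ℂ) * ((p₀ ^ 2 + e ^ 2 : ℝ) : ℂ))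

theorem norm_schwingerIntegrand (p₀ e α : ℝ) :
    ‖schwingerIntegrand p₀ e α‖ = √(p₀ ^ 2 + e ^ 2) * Real.exp (-α * (p₀ ^ 2 + e ^ 2)) := by
  rw [schwingerIntegrand, norm_mul, norm_exp, norm_def, normSq_apply]
  congr 2
  · simp only [neg_mul, add_re, neg_re, mul_re, ofReal_re, I_re, mul_zero, ofReal_im, I_im,
      mul_one, sub_self, neg_zero, zero_add, add_im, neg_im, mul_im, add_zero, mul_neg, neg_neg]
    ring
  · rw [← ofReal_neg, ← ofReal_mul, ofReal_re]

theorem norm_intervalIntegral_schwingerIntegrand_le (p₀ e : ℝ) {a b : ℝ} (hab : a ≤ b) :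
    ‖∫ α in a..b, schwingerIntegrand p₀ e α‖ ≤
      √(p₀ ^ 2 + e ^ 2) * Real.exp (-a * (p₀ ^ 2 + e ^ 2)) * (b - a) := by
  rw [← abs_of_nonneg (sub_nonneg.2 hab)]
  refine intervalIntegral.norm_integral_le_of_norm_le_const fun α hα => ?_
  rw [Set.uIoc_of_le hab] at hα
  rw [norm_schwingerIntegrand]
  gcongr
  exact hα.1.le

theorem mul_exp_neg_sq_le (t : ℝ) : t * Real.exp (-t ^ 2) ≤ Real.exp (-t ^ 2 / 2) := by
  have ht : t ≤ Real.exp (t ^ 2 / 2) := by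
    nlinarith [Real.add_one_le_exp (t ^ 2 / 2), sq_nonneg (t - 1)]
  calc t * Real.exp (-t ^ 2) ≤ Real.exp (t ^ 2 / 2) * Real.exp (-t ^ 2) := by gcongr
    _ = Real.exp (-t ^ 2 / 2) := by rw [← Real.exp_add]; ring_nf

theorem div_four_le_sq_div_two_add (u : ℝ) : u / 4 ≤ u ^ 2 / 2 + 1 / 32 := by
  nlinarith [sq_nonneg (u - 1 / 4)]

theorem mul_abs_add_le_half_sq_add_one {s : ℝ} (hs : 0 ≤ s) (hs1 : s ≤ 1) (p₀ q : ℝ) :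
    s * (|p₀| + q) / 4 ≤ s ^ 2 * (p₀ ^ 2 + (q - 1) ^ 2) / 2 + 1 := by
  have h₀ := div_four_le_sq_div_two_add (s * |p₀|)
  have h₁ := div_four_le_sq_div_two_add (s * |q - 1|)
  have hq : q ≤ |q - 1| + 1 := by linarith [le_abs_self (q - 1)]
  rw [mul_pow, sq_abs] at h₀
  rw [mul_pow, sq_abs] at h₁
  nlinarith

theorem norm_intervalIntegral_schwingerIntegrand_slice_le (p₀ q : ℝ) {s c : ℝ}
    (hs : 0 ≤ s) (hs1 : s ≤ 1) (hc : 1 ≤ c) :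
    ‖∫ α in s ^ 2..c * s ^ 2, schwingerIntegrand p₀ (q - 1) α‖ ≤
      c * Real.exp 1 * s * Real.exp (-(1 / 4) * s * (|p₀| + q)) := by
  set E := p₀ ^ 2 + (q - 1) ^ 2
  have hE : 0 ≤ E := by positivity
  have hlen : c * s ^ 2 - s ^ 2 ≤ c * s * s := by nlinarith
  have hgauss : s * √E * Real.exp (-s ^ 2 * E) ≤ Real.exp (-(s ^ 2 * E) / 2) := by
    rw [neg_mul]
    simpa only [mul_pow, Real.sq_sqrt hE] using mul_exp_neg_sq_le (s * √E)
  have hexp : Real.exp (-(s ^ 2 * E) / 2) ≤ Real.exp 1 * Real.exp (-(1 / 4) * s * (|p₀| + q)) := by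
    rw [← Real.exp_add, Real.exp_le_exp]
    linarith [mul_abs_add_le_half_sq_add_one hs hs1 p₀ q]
  calc ‖∫ α in s ^ 2..c * s ^ 2, schwingerIntegrand p₀ (q - 1) α‖
      ≤ √E * Real.exp (-s ^ 2 * E) * (c * s ^ 2 - s ^ 2) :=
        norm_intervalIntegral_schwingerIntegrand_le _ _ (by nlinarith)
    _ ≤ √E * Real.exp (-s ^ 2 * E) * (c * s * s) := by gcongr
    _ = c * s * (s * √E * Real.exp (-s ^ 2 * E)) := by ring
    _ ≤ c * s * (Real.exp 1 * Real.exp (-(1 / 4) * s * (|p₀| + q))) := by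
        gcongr ?_ * ?_; exact hgauss.trans hexp
    _ = c * Real.exp 1 * s * Real.exp (-(1 / 4) * s * (|p₀| + q)) := by ring

theorem rpow_neg_two_mul {M : ℝ} (hM : 0 < M) (t : ℝ) : M ^ (-2 * t) = (M ^ (-t)) ^ 2 := by
  rw [← Real.rpow_natCast, ← Real.rpow_mul hM.le]
  norm_num [mul_comm]

theorem rpow_neg_two_mul_sub_one {M : ℝ} (hM : 0 < M) (t : ℝ) :
    M ^ (-2 * (t - 1)) = M ^ 2 * (M ^ (-t)) ^ 2 := by
  rw [← rpow_neg_two_mul hM, ← Real.rpow_two, ← Real.rpow_add hM]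
  ring_nf

theorem sliced_propagator_bound (M : ℝ) (hM : M > 1) :
    ∃ K δ : ℝ, K > 0 ∧ δ > 0 ∧
      ∀ i : ℕ, i ≥ 1 → ∀ p₀ : ℝ, ∀ p : EuclideanSpace ℝ (Fin 3),
        ‖∫ α in (M ^ (-2 * (i : ℝ)))..(M ^ (-2 * ((i : ℝ) - 1))),
            (-(p₀ : ℂ) * Complex.I + ((‖p‖ ^ 2 - 1 : ℝ) : ℂ)) *
              Complex.exp (-(α : ℂ) * (((p₀ ^ 2 + (‖p‖ ^ 2 - 1) ^ 2 : ℝ)) : ℂ))‖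
          ≤ K * M ^ (-(i : ℝ)) * Real.exp (-δ * M ^ (-(i : ℝ)) * (|p₀| + ‖p‖ ^ 2)) := by
  have hM₀ : 0 < M := zero_lt_one.trans hM
  refine ⟨M ^ 2 * Real.exp 1, 1 / 4, by positivity, by norm_num, fun i _ p₀ p => ?_⟩
  have hs₁ : M ^ (-(i : ℝ)) ≤ 1 :=
    Real.rpow_le_one_of_one_le_of_nonpos hM.le (neg_nonpos.2 i.cast_nonneg)
  rw [rpow_neg_two_mul hM₀, rpow_neg_two_mul_sub_one hM₀]
  exact norm_intervalIntegral_schwingerIntegrand_slice_le p₀ (‖p‖ ^ 2)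
    (Real.rpow_nonneg hM₀.le _) hs₁ (one_le_pow₀ hM.le)
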